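/- arXiv:1504.06455 — 4 statements merged into one kernel-verified Lean document; each statement's English description precedes it below -/
import Mathlib

section
/- For every ρ > 0, ρ · ∫_0^∞ (log t)/((1+t)(1+t+ρ)) dt = (1/2)·(log(1+ρ))^2. -/
/-!
The substitution `t = a b / u` preserves the measure `dt / ((t + a) (t + b))` on `(0, ∞)` and
sends `log t` to `log (a b) - log u`. Hence `∫ log t dt / ((t + a) (t + b))` is `log (a b) / 2`
times the elementary integral `∫ dt / ((t + a) (t + b)) = (log b - log a) / (b - a)`.
-/

open MeasureTheory Real Set Filter Topology Asymptotics

theorem integral_Ioi_comp_div {E : Type*} [NormedAddCommGroup E] [NormedSpace ℝ E]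
    (g : ℝ → E) {c : ℝ} (hc : 0 < c) :
    ∫ u in Ioi 0, (c / u ^ 2) • g (c / u) = ∫ t in Ioi 0, g t := by
  have himage : (c / ·) '' Ioi (0 : ℝ) = Ioi 0 := by
    ext t
    refine ⟨?_, fun ht => ⟨c / t, div_pos hc ht, div_div_cancel₀ hc.ne'⟩⟩
    rintro ⟨u, hu, rfl⟩
    exact div_pos hc hu
  have hderiv : ∀ u ∈ Ioi (0 : ℝ), HasDerivWithinAt (c / ·) (-(c / u ^ 2)) (Ioi 0) u := by
    intro u hu
    simpa [div_eq_mul_inv, neg_div] using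
      ((hasDerivAt_inv (ne_of_gt hu)).const_mul c).hasDerivWithinAt
  have hinj : InjOn (c / ·) (Ioi (0 : ℝ)) := fun u _ v _ h => by
    simpa [div_eq_mul_inv, hc.ne'] using h
  conv_rhs =>
    rw [← himage, integral_image_eq_integral_abs_deriv_smul measurableSet_Ioi hderiv hinj]
  refine setIntegral_congr_fun measurableSet_Ioi fun u hu => ?_
  rw [abs_neg, abs_of_pos (div_pos hc (pow_pos hu 2))]

theorem integrableOn_Ioi_of_isBigO_rpow {g : ℝ → ℝ} {a b : ℝ}
    (hg : LocallyIntegrableOn g (Ioi 0)) (h_top : g =O[atTop] (· ^ (-a))) (ha : 1 < a)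
    (h_bot : g =O[𝓝[>] 0] (· ^ (-b))) (hb : b < 1) :
    IntegrableOn g (Ioi 0) := by
  simpa using mellin_convergent_of_isBigO_scalar hg h_top ha h_bot hb

theorem integrableOn_Ioi_log_mul_of_isBigO_rpow {g : ℝ → ℝ} {a b : ℝ}
    (hg : ContinuousOn g (Ioi 0)) (h_top : g =O[atTop] (· ^ (-a))) (ha : 1 < a)
    (h_bot : g =O[𝓝[>] 0] (· ^ (-b))) (hb : b < 1) :
    IntegrableOn (fun t => log t * g t) (Ioi 0) := by
  have hcont : ContinuousOn (fun t => log t * g t) (Ioi 0) :=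
    (continuousOn_log.mono fun t ht => ne_of_gt ht).mul hg
  exact integrableOn_Ioi_of_isBigO_rpow (hcont.locallyIntegrableOn measurableSet_Ioi)
    (isBigO_rpow_top_log_smul (b := (1 + a) / 2) (by linarith) h_top) (by linarith)
    (isBigO_rpow_zero_log_smul (b := (1 + b) / 2) (by linarith) h_bot) (by linarith)

section InvMulAdd

variable {a b : ℝ}

theorem isBigO_atTop_inv_mul_add (ha : 0 ≤ a) (hb : 0 ≤ b) :
    (fun t : ℝ => ((t + a) * (t + b))⁻¹) =O[atTop] (· ^ (-2 : ℝ)) := by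
  refine IsBigO.of_bound 1 ?_
  filter_upwards [eventually_gt_atTop 0] with t ht
  rw [one_mul, rpow_neg ht.le, rpow_two, norm_inv, norm_inv, norm_mul,
    Real.norm_of_nonneg (by positivity), Real.norm_of_nonneg (by positivity),
    Real.norm_of_nonneg (by positivity)]
  gcongr
  nlinarith

theorem isBigO_nhdsGT_zero_inv_mul_add (ha : 0 < a) (hb : 0 < b) :
    (fun t : ℝ => ((t + a) * (t + b))⁻¹) =O[𝓝[>] 0] fun _ => (1 : ℝ) := by
  have hcont : ContinuousAt (fun t : ℝ => ((t + a) * (t + b))⁻¹) 0 := by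
    fun_prop (disch := positivity)
  exact (hcont.tendsto.isBigO_one ℝ).mono nhdsWithin_le_nhds

theorem continuousOn_inv_mul_add (ha : 0 ≤ a) (hb : 0 ≤ b) :
    ContinuousOn (fun t : ℝ => ((t + a) * (t + b))⁻¹) (Ioi 0) := by
  intro t ht
  have ht : 0 < t := ht
  exact ContinuousAt.continuousWithinAt (by fun_prop (disch := positivity))

theorem integrableOn_Ioi_inv_mul_add (ha : 0 < a) (hb : 0 < b) :
    IntegrableOn (fun t : ℝ => ((t + a) * (t + b))⁻¹) (Ioi 0) :=
  integrableOn_Ioi_of_isBigO_rpow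
    ((continuousOn_inv_mul_add ha.le hb.le).locallyIntegrableOn measurableSet_Ioi)
    (isBigO_atTop_inv_mul_add ha.le hb.le) one_lt_two
    (b := 0) (by simpa using isBigO_nhdsGT_zero_inv_mul_add ha hb) zero_lt_one

theorem integrableOn_Ioi_log_mul_inv_mul_add (ha : 0 < a) (hb : 0 < b) :
    IntegrableOn (fun t : ℝ => log t * ((t + a) * (t + b))⁻¹) (Ioi 0) :=
  integrableOn_Ioi_log_mul_of_isBigO_rpow (continuousOn_inv_mul_add ha.le hb.le)
    (isBigO_atTop_inv_mul_add ha.le hb.le) one_lt_two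
    (b := 0) (by simpa using isBigO_nhdsGT_zero_inv_mul_add ha hb) zero_lt_one

theorem tendsto_log_add_sub_log_add :
    Tendsto (fun t : ℝ => log (t + a) - log (t + b)) atTop (𝓝 0) := by
  simpa using (tendsto_log_comp_add_sub_log a).sub (tendsto_log_comp_add_sub_log b)

theorem hasDerivAt_log_add_sub_log_add_div {x : ℝ} (ha : 0 < x + a) (hb : 0 < x + b)
    (hab : a ≠ b) :
    HasDerivAt (fun t => (log (t + a) - log (t + b)) / (b - a)) ((x + a) * (x + b))⁻¹ x := by
  have h := ((((hasDerivAt_id x).add_const a).log ha.ne').sub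
    (((hasDerivAt_id x).add_const b).log hb.ne')).div_const (b - a)
  refine h.congr_deriv ?_
  have : b - a ≠ 0 := sub_ne_zero.mpr hab.symm
  simp only [id]
  field_simp
  ring

theorem integral_Ioi_inv_mul_add (ha : 0 < a) (hb : 0 < b) (hab : a ≠ b) :
    ∫ t in Ioi 0, ((t + a) * (t + b))⁻¹ = (log b - log a) / (b - a) := by
  have h := integral_Ioi_of_hasDerivAt_of_nonneg' (a := 0) (l := 0)
    (fun x (hx : 0 ≤ x) => hasDerivAt_log_add_sub_log_add_div (by linarith) (by linarith) hab)
    (fun x (hx : 0 < x) => by positivity)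
    (by simpa using tendsto_log_add_sub_log_add.div_const (b - a))
  rw [h, zero_add, zero_add]
  ring

theorem integral_Ioi_log_mul_inv_mul_add (ha : 0 < a) (hb : 0 < b) :
    ∫ t in Ioi 0, log t * ((t + a) * (t + b))⁻¹ =
      log (a * b) / 2 * ∫ t in Ioi 0, ((t + a) * (t + b))⁻¹ := by
  have hab : 0 < a * b := mul_pos ha hb
  have hsubst : ∫ t in Ioi 0, log t * ((t + a) * (t + b))⁻¹ =
      ∫ u in Ioi 0, (log (a * b) - log u) * ((u + a) * (u + b))⁻¹ := by
    rw [← integral_Ioi_comp_div _ hab]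
    refine setIntegral_congr_fun measurableSet_Ioi fun u (hu : 0 < u) => ?_
    rw [smul_eq_mul, log_div hab.ne' hu.ne']
    field_simp
    ring
  have hsplit : ∫ u in Ioi 0, (log (a * b) - log u) * ((u + a) * (u + b))⁻¹ =
      log (a * b) * (∫ t in Ioi 0, ((t + a) * (t + b))⁻¹) -
        ∫ t in Ioi 0, log t * ((t + a) * (t + b))⁻¹ := by
    simp_rw [sub_mul]
    rw [integral_sub ((integrableOn_Ioi_inv_mul_add ha hb).const_mul _)
      (integrableOn_Ioi_log_mul_inv_mul_add ha hb), integral_const_mul]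
  linarith

end InvMulAdd

theorem integral_log_div_prod (ρ : ℝ) (hρ : 0 < ρ) :
    ρ * ∫ t in Set.Ioi (0 : ℝ), Real.log t / ((1 + t) * (1 + t + ρ)) =
      (Real.log (1 + ρ)) ^ 2 / 2 := by
  have hb : 0 < 1 + ρ := by linarith
  have hintegrand : (fun t => log t / ((1 + t) * (1 + t + ρ))) =
      fun t => log t * ((t + 1) * (t + (1 + ρ)))⁻¹ := by
    funext t
    ring
  rw [hintegrand, integral_Ioi_log_mul_inv_mul_add one_pos hb,
    integral_Ioi_inv_mul_add one_pos hb (by linarith), one_mul, log_one, sub_zero,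
    add_sub_cancel_left]
  field_simp
end

section
/- For the MNS shape ψ(t) = 1/(1+e^t), and every real u ≠ 0, ∫_{-∞}^{∞} ψ(t)·(1 - ψ(t+u)) dt = u/(1 - e^{-u}). -/
/-!
With `softplus s = log (1 + e^s)`, whose derivative is `1 - ψ s`, the integrand is
`c ((1 - ψ (t + u)) - (1 - ψ t))` for `c = e^u / (e^u - 1)`, so
`c (softplus (t + u) - softplus t)` is an antiderivative. It tends to `0` at `-∞` and, because
`softplus s = s + softplus (-s)`, to `c u` at `+∞`. Since the integrand is nonnegative, it is
integrable and its integral is `c u`.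
-/

open MeasureTheory Real

/-- The MNS (Fermi) shape function `ψ(t) = 1/(1+e^t)`. -/
noncomputable def mnsShape (t : ℝ) : ℝ := (1 + Real.exp t)⁻¹

open Filter Set Topology

namespace MeasureTheory

variable {g g' : ℝ → ℝ} {a l m n : ℝ}

theorem integrableOn_Iio_deriv_of_nonneg (hderiv : ∀ x ∈ Iic a, HasDerivAt g (g' x) x)
    (g'pos : ∀ x ∈ Iio a, 0 ≤ g' x) (hg : Tendsto g atBot (𝓝 l)) :
    IntegrableOn g' (Iio a) := by
  have hrefl : IntegrableOn (fun x => g' (-x)) (Ioi (-a)) := by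
    refine integrableOn_Ioi_deriv_of_nonneg' (g := fun x => -g (-x)) (l := -l)
      (fun x hx => ?_) (fun x hx => g'pos (-x) (mem_Iio.mpr (neg_lt.mp hx))) ?_
    · have hg' := hderiv (-x) (mem_Iic.mpr (neg_le.mp hx))
      simpa using (hg'.comp x (hasDerivAt_neg x)).fun_neg
    · exact (hg.comp tendsto_neg_atTop_atBot).neg
  simpa using hrefl.comp_neg_Iio

theorem integrable_deriv_of_nonneg (hderiv : ∀ x, HasDerivAt g (g' x) x)
    (g'pos : ∀ x, 0 ≤ g' x) (hbot : Tendsto g atBot (𝓝 m))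
    (htop : Tendsto g atTop (𝓝 n)) : Integrable g' := by
  rw [← integrableOn_univ, ← Iio_union_Ici (a := (0 : ℝ))]
  have hIio : IntegrableOn g' (Iio 0) :=
    integrableOn_Iio_deriv_of_nonneg (fun x _ => hderiv x) (fun x _ => g'pos x) hbot
  have hIoi : IntegrableOn g' (Ioi 0) :=
    integrableOn_Ioi_deriv_of_nonneg' (fun x _ => hderiv x) (fun x _ => g'pos x) htop
  exact hIio.union ((integrableOn_Ici_iff_integrableOn_Ioi).mpr hIoi)

theorem integral_of_hasDerivAt_of_nonneg (hderiv : ∀ x, HasDerivAt g (g' x) x)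
    (g'pos : ∀ x, 0 ≤ g' x) (hbot : Tendsto g atBot (𝓝 m))
    (htop : Tendsto g atTop (𝓝 n)) : ∫ x, g' x = n - m :=
  integral_of_hasDerivAt_of_tendsto hderiv (integrable_deriv_of_nonneg hderiv g'pos hbot htop)
    hbot htop

end MeasureTheory

noncomputable def softplus (s : ℝ) : ℝ := log (1 + exp s)

lemma one_sub_mnsShape (s : ℝ) : 1 - mnsShape s = exp s / (1 + exp s) := by
  unfold mnsShape
  field_simp
  ring

lemma mnsShape_pos (s : ℝ) : 0 < mnsShape s := by unfold mnsShape; positivity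

lemma one_sub_mnsShape_pos (s : ℝ) : 0 < 1 - mnsShape s := by
  rw [one_sub_mnsShape]; positivity

lemma hasDerivAt_softplus (s : ℝ) : HasDerivAt softplus (1 - mnsShape s) s := by
  rw [one_sub_mnsShape]
  exact ((hasDerivAt_exp s).const_add 1).log (by positivity)

lemma softplus_eq_add_softplus_neg (s : ℝ) : softplus s = s + softplus (-s) := by
  unfold softplus
  rw [← log_exp s, ← log_mul (exp_pos s).ne' (by positivity), log_exp, mul_add, mul_one,
    ← exp_add, add_neg_cancel, exp_zero, add_comm]

lemma tendsto_softplus_atBot : Tendsto softplus atBot (𝓝 0) := by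
  show Tendsto (fun s => log (1 + exp s)) atBot (𝓝 0)
  have h : Tendsto (fun s => 1 + exp s) atBot (𝓝 1) := by
    simpa using tendsto_exp_atBot.const_add 1
  simpa using h.log one_ne_zero

lemma tendsto_softplus_add_sub_softplus_atBot (u : ℝ) :
    Tendsto (fun t => softplus (t + u) - softplus t) atBot (𝓝 0) := by
  simpa using (tendsto_softplus_atBot.comp (tendsto_atBot_add_const_right _ u tendsto_id)).sub
    tendsto_softplus_atBot

lemma tendsto_softplus_add_sub_softplus_atTop (u : ℝ) :
    Tendsto (fun t => softplus (t + u) - softplus t) atTop (𝓝 u) := by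
  have hneg : Tendsto (fun t => softplus (-t)) atTop (𝓝 0) :=
    tendsto_softplus_atBot.comp tendsto_neg_atTop_atBot
  have hshift : Tendsto (fun t => u + (softplus (-(t + u)) - softplus (-t))) atTop
      (𝓝 (u + (0 - 0))) :=
    tendsto_const_nhds.add ((hneg.comp (tendsto_atTop_add_const_right _ u tendsto_id)).sub hneg)
  refine (hshift.congr fun t => ?_).trans (by simp)
  rw [softplus_eq_add_softplus_neg (t + u), softplus_eq_add_softplus_neg t]
  ring

lemma exp_sub_one_ne_zero {u : ℝ} (hu : u ≠ 0) : exp u - 1 ≠ 0 :=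
  sub_ne_zero.mpr fun h => hu ((exp_eq_one_iff u).mp h)

lemma mnsShape_mul_one_sub_mnsShape_add (t : ℝ) {u : ℝ} (hu : u ≠ 0) :
    mnsShape t * (1 - mnsShape (t + u)) =
      exp u / (exp u - 1) * ((1 - mnsShape (t + u)) - (1 - mnsShape t)) := by
  have := exp_sub_one_ne_zero hu
  rw [one_sub_mnsShape, one_sub_mnsShape, mnsShape, exp_add]
  field_simp
  ring

theorem mns_variance_integral (u : ℝ) (hu : u ≠ 0) :
    ∫ t : ℝ, mnsShape t * (1 - mnsShape (t + u)) = u / (1 - Real.exp (-u)) := by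
  set c := exp u / (exp u - 1)
  have hderiv (t : ℝ) : HasDerivAt (fun t => c * (softplus (t + u) - softplus t))
      (mnsShape t * (1 - mnsShape (t + u))) t := by
    rw [mnsShape_mul_one_sub_mnsShape_add t hu]
    exact (((hasDerivAt_softplus (t + u)).comp_add_const t u).sub
      (hasDerivAt_softplus t)).const_mul c
  rw [integral_of_hasDerivAt_of_nonneg hderiv
    (fun t => (mul_pos (mnsShape_pos t) (one_sub_mnsShape_pos (t + u))).le)
    ((tendsto_softplus_add_sub_softplus_atBot u).const_mul c)
    ((tendsto_softplus_add_sub_softplus_atTop u).const_mul c)]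
  have := exp_sub_one_ne_zero hu
  simp only [c, mul_zero, sub_zero, exp_neg]
  field_simp
end

section
/- For every w > 0 and u ∈ ℝ, ∫_{-∞}^{∞} (sin²(π u z)/z²) · cos(2π w z) dz = π² · max(|u| - w, 0). -/
/-!
The function `sin (π u z) ^ 2 / (π z) ^ 2` is the Fourier transform of the triangle
`x ↦ max (|u| - |x|) 0`: on `[0, |u|]` the transform reduces to `2 ∫ (|u| - x) cos (2π z x) dx`,
which is elementary. Both are integrable, so Fourier inversion at `w` recovers the triangle, and,
taking real parts, the inversion integral is the cosine integral of the statement.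
-/

open MeasureTheory Real

open scoped FourierTransform

noncomputable def triangle (a x : ℝ) : ℝ := max (a - |x|) 0

@[fun_prop]
lemma continuous_triangle (a : ℝ) : Continuous (triangle a) := by
  unfold triangle; fun_prop

lemma support_triangle_subset (a : ℝ) : Function.support (triangle a) ⊆ Set.Ioo (-a) a := by
  intro x hx
  by_contra h
  exact hx (max_eq_right (by rw [sub_nonpos, ← not_lt, abs_lt]; exact h))

lemma triangle_of_nonneg_of_le {a x : ℝ} (hx : 0 ≤ x) (hxa : x ≤ a) :
    triangle a x = a - x := by
  simp [triangle, abs_of_nonneg hx, hxa]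

lemma triangle_neg (a x : ℝ) : triangle a (-x) = triangle a x := by
  simp [triangle]

lemma integrable_triangle (a : ℝ) : Integrable (triangle a) :=
  (continuous_triangle a).integrable_of_hasCompactSupport <|
    HasCompactSupport.intro isCompact_Icc fun _ hx =>
      Function.notMem_support.1 fun h => hx (Set.Ioo_subset_Icc_self (support_triangle_subset a h))

lemma intervalIntegral.integral_symm_eq_integral_add_comp_neg {E : Type*} [NormedAddCommGroup E]
    [NormedSpace ℝ E] {f : ℝ → E} {a : ℝ} (hf : IntervalIntegrable f volume (-a) a) :
    ∫ x in -a..a, f x = ∫ x in 0..a, (f x + f (-x)) := by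
  have h0 : (0 : ℝ) ∈ Set.uIcc (-a) a := by
    rcases le_total 0 a with h | h <;> simp [h]
  have hneg : IntervalIntegrable f volume (-a) 0 := hf.mono_set (Set.uIcc_subset_uIcc_left h0)
  have hpos : IntervalIntegrable f volume 0 a := hf.mono_set (Set.uIcc_subset_uIcc_right h0)
  rw [← intervalIntegral.integral_add_adjacent_intervals hneg hpos,
    intervalIntegral.integral_add hpos
      (by simpa using ((IntervalIntegrable.iff_comp_neg (f := f)).1 hneg).symm),
    intervalIntegral.integral_comp_neg, neg_zero, add_comm]

lemma integral_sub_mul_cos (a c : ℝ) (hc : c ≠ 0) :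
    ∫ x in 0..a, (a - x) * cos (c * x) = (1 - cos (c * a)) / c ^ 2 := by
  have hderiv : ∀ x ∈ Set.uIcc 0 a,
      HasDerivAt (fun x => (a - x) * sin (c * x) / c - cos (c * x) / c ^ 2)
        ((a - x) * cos (c * x)) x := by
    intro x _
    have hlin : HasDerivAt (fun x => c * x) c x := by simpa using (hasDerivAt_id x).const_mul c
    refine (((hasDerivAt_id' x).const_sub a).fun_mul hlin.sin).div_const c |>.fun_sub
      (hlin.cos.div_const (c ^ 2)) |>.congr_deriv ?_
    field_simp
    ring
  rw [intervalIntegral.integral_eq_sub_of_hasDerivAt hderiv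
    (Continuous.intervalIntegrable (by fun_prop) _ _)]
  simp only [sub_self, zero_mul, zero_div, zero_sub, sub_zero, mul_zero, sin_zero, cos_zero,
    one_div, sub_neg_eq_add]
  ring

lemma fourier_triangle {a z : ℝ} (ha : 0 ≤ a) (hz : z ≠ 0) :
    𝓕 (fun x => (triangle a x : ℂ)) z = ↑(sin (π * a * z) ^ 2 / (π * z) ^ 2) := by
  set F : ℝ → ℂ := fun v =>
    Complex.exp (↑(-2 * π * v * z) * Complex.I) • (triangle a v : ℂ)
  have hF : Continuous F := by fun_prop
  have hpoint : ∀ v ∈ Set.uIcc 0 a,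
      F v + F (-v) = ↑(2 * ((a - v) * cos (2 * π * z * v))) := by
    intro v hv
    rw [Set.uIcc_of_le ha] at hv
    simp only [F, triangle_neg, triangle_of_nonneg_of_le hv.1 hv.2, smul_eq_mul]
    push_cast
    rw [Complex.cos]
    ring_nf
  calc 𝓕 (fun x => (triangle a x : ℂ)) z
      = ∫ v, F v := Real.fourier_real_eq_integral_exp_smul _ _
    _ = ∫ v in -a..a, F v := by
      refine (intervalIntegral.integral_eq_integral_of_support_subset fun v hv => ?_).symm
      refine Set.Ioo_subset_Ioc_self (support_triangle_subset a fun h => hv ?_)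
      simp [F, h]
    _ = ∫ v in 0..a, F v + F (-v) :=
      intervalIntegral.integral_symm_eq_integral_add_comp_neg (hF.intervalIntegrable _ _)
    _ = ↑(2 * ∫ v in 0..a, (a - v) * cos (2 * π * z * v)) := by
      rw [intervalIntegral.integral_congr hpoint, intervalIntegral.integral_ofReal,
        intervalIntegral.integral_const_mul]
    _ = ↑(sin (π * a * z) ^ 2 / (π * z) ^ 2) := by
      rw [integral_sub_mul_cos _ _ (by positivity), show 2 * π * z * a = 2 * (π * a * z) by ring,
        cos_two_mul, cos_sq']
      congr 1
      field_simp
      ring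

lemma sin_sq_div_sq_le (b c z : ℝ) :
    sin (b * z) ^ 2 / (c * z) ^ 2 ≤ (b ^ 2 + 1) / c ^ 2 / (1 + z ^ 2) := by
  rcases eq_or_ne (c * z) 0 with h | h
  · rw [h, zero_pow two_ne_zero, div_zero]
    positivity
  have hc : c ≠ 0 := left_ne_zero_of_mul h
  have key : sin (b * z) ^ 2 * (1 + z ^ 2) ≤ (b ^ 2 + 1) * z ^ 2 := by
    nlinarith [sin_sq_le_one (b * z), sin_sq_le_sq (x := b * z), mul_pow b z 2]
  rw [div_div, div_le_div_iff₀ (by positivity) (by positivity), mul_pow]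
  nlinarith [mul_le_mul_of_nonneg_left key (sq_nonneg c)]

lemma integrable_sin_sq_div_sq (b c : ℝ) :
    Integrable fun z => sin (b * z) ^ 2 / (c * z) ^ 2 :=
  (integrable_inv_one_add_sq.const_mul ((b ^ 2 + 1) / c ^ 2)).mono'
    (Measurable.aestronglyMeasurable (by fun_prop)) <| .of_forall fun z => by
      rw [norm_of_nonneg (by positivity), ← div_eq_mul_inv]
      exact sin_sq_div_sq_le b c z

lemma integral_mul_cos_eq_of_fourier_eq {f g : ℝ → ℝ} {w : ℝ} (hf : Integrable f)
    (hfw : ContinuousAt f w) (hg : Integrable g)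
    (hfg : 𝓕 (fun x => (f x : ℂ)) =ᵐ[volume] fun z => (g z : ℂ)) :
    ∫ z, g z * cos (2 * π * w * z) = f w := by
  have hinv : 𝓕⁻ (𝓕 (fun x => (f x : ℂ))) w = f w :=
    hf.ofReal.fourierInv_fourier_eq (hg.ofReal.congr hfg.symm)
      (Complex.continuous_ofReal.continuousAt.comp hfw)
  have hint : Integrable fun z => Complex.exp (↑(-2 * π * z * -w) * Complex.I) • (g z : ℂ) :=
    hg.ofReal.bdd_mul (c := 1) (by fun_prop)
      (.of_forall fun z => (Complex.norm_exp_ofReal_mul_I _).le)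
  calc ∫ z, g z * cos (2 * π * w * z)
      = (∫ z, Complex.exp (↑(-2 * π * z * -w) * Complex.I) • (g z : ℂ)).re := by
        rw [← RCLike.re_to_complex, ← integral_re hint]
        congr 1 with z
        rw [smul_eq_mul, RCLike.re_to_complex, Complex.re_mul_ofReal,
          Complex.exp_ofReal_mul_I_re, mul_comm]
        ring_nf
    _ = (𝓕⁻ (𝓕 (fun x => (f x : ℂ))) w).re := by
        rw [fourierInv_eq_fourier_neg, Real.fourier_real_eq_integral_exp_smul]
        exact congrArg _ (integral_congr_ae (hfg.mono fun z hz => by rw [hz])).symm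
    _ = f w := by rw [hinv, Complex.ofReal_re]

theorem integral_sin_sq_cos (w u : ℝ) (hw : 0 < w) :
    ∫ z : ℝ, (Real.sin (Real.pi * u * z)) ^ 2 / z ^ 2 * Real.cos (2 * Real.pi * w * z) =
      Real.pi ^ 2 * max (|u| - w) 0 := by
  have hfourier : 𝓕 (fun x => (triangle |u| x : ℂ)) =ᵐ[volume]
      fun z => ((sin (π * |u| * z) ^ 2 / (π * z) ^ 2 : ℝ) : ℂ) :=
    (Measure.ae_ne volume 0).mono fun z hz => fourier_triangle (abs_nonneg u) hz
  have hinv := integral_mul_cos_eq_of_fourier_eq (integrable_triangle |u|)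
    ((continuous_triangle |u|).continuousAt (x := w)) (integrable_sin_sq_div_sq _ π) hfourier
  have hsin : ∀ z, sin (π * |u| * z) ^ 2 = sin (π * u * z) ^ 2 := fun z => by
    rcases abs_choice u with h | h <;> simp [h, sin_neg]
  calc ∫ z, sin (π * u * z) ^ 2 / z ^ 2 * cos (2 * π * w * z)
      = ∫ z, π ^ 2 * (sin (π * |u| * z) ^ 2 / (π * z) ^ 2 * cos (2 * π * w * z)) := by
        congr 1 with z
        rw [hsin, mul_pow]
        field_simp
    _ = π ^ 2 * max (|u| - w) 0 := by
        rw [integral_const_mul, hinv, triangle, abs_of_pos hw]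
end

section
/- Let Ψ be a symmetric shape function, i.e. Ψ : ℝ → [0,1] differentiable, non-increasing, with 1 - Ψ(-x) = Ψ(x) for all x, Ψ ∈ L¹(0,∞), and suitable integrability of x·Ψ'(x)·Ψ(x)^k(1-Ψ(x))^{n-1-k}. Then for every m ≥ 1 the constant B^{2m+1}_Ψ := Σ_{k=0}^{2m} b^{2m+1}_k ∫ x·(-Ψ'(x))·Ψ(x)^k·(1-Ψ(x))^{2m-k} dx vanishes: B^{2m+1}_Ψ = 0. -/
open MeasureTheory Finset Set

/-- The coefficients `b^n_k` (as real numbers). -/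
noncomputable def bcoef (n k : ℕ) : ℝ :=
  ∑ l ∈ Finset.Icc 1 (k + 1),
    (-1 : ℝ) ^ (l + 1) * (Nat.choose (n - l) (k + 1 - l) : ℝ) *
      ∑ c ∈ Finset.univ.filter (fun c : Composition n => c.length = l),
        ((n.factorial : ℝ) / ((c.blocks.map Nat.factorial).prod : ℝ))

open PowerSeries
open scoped Nat

/-!
Substituting `x ↦ -x` and using `Ψ (-x) = 1 - Ψ x` (so that `Ψ'` is even) shows that the integral
with exponents `(k, 2m - k)` is minus the one with exponents `(2m - k, k)`. The coefficients are
symmetric as well: `b^n_k = (-1)^k A(n, k)` with `A` the Eulerian numbers, and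
`A(n, k) = A(n, n - 1 - k)`, so for odd `n` the terms `k` and `n - 1 - k` cancel.
The sum over compositions of length `l` in `b^n_k` is `n! [x^n] (e^x - 1)^l`, i.e. the number of
surjections `Fin n → Fin l`; the upper Vandermonde identity then turns `b^n_k` into the explicit
formula for `A(n, k)`, whose symmetry is the vanishing of the `(n+1)`-st finite difference of a
polynomial of degree `n`.
-/

theorem alternating_sum_range_choose_mul_sub_pow {R : Type*} [CommRing R] {n N : ℕ}
    (h : n < N) (c : R) :
    ∑ i ∈ range (N + 1), (-1) ^ i * (N.choose i : R) * (c - i) ^ n = 0 := by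
  have hΔ := congrFun (fwdDiff_iter_pow_eq_zero_of_lt (R := R) h) (-c)
  rw [fwdDiff_iter_eq_sum_shift, Pi.zero_apply] at hΔ
  refine ((isUnit_neg_one.pow (N + n)).mul_right_eq_zero).1 ?_
  rw [mul_sum, ← hΔ]
  refine sum_congr rfl fun i hi => ?_
  have hsign : (-1 : R) ^ (N + n) * (-1) ^ i = (-1) ^ (N - i) * (-1) ^ n := by
    have := mem_range.1 hi
    rw [← pow_add, ← pow_add]
    exact neg_one_pow_congr (by simp only [Nat.even_iff]; omega)
  rw [zsmul_eq_mul, nsmul_eq_mul, mul_one, show -c + i = -1 * (c - i) by ring, mul_pow]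
  push_cast
  linear_combination (N.choose i : R) * (c - i) ^ n * hsign

theorem sum_range_choose_mul_choose_add (m r j : ℕ) :
    ∑ l ∈ range (m + 1), l.choose j * (m - l + r).choose r
      = (m + r + 1).choose (j + r + 1) := by
  induction m generalizing j with
  | zero => rcases j with _ | j <;> simp [Nat.choose_eq_zero_of_lt]
  | succ m ih =>
    rcases j with _ | j
    · simp only [Nat.choose_zero_right, one_mul, zero_add]
      rw [← sum_range_reflect, ← Nat.sum_range_add_choose]
      refine sum_congr rfl fun l hl => ?_
      have := mem_range.1 hl
      congr 1
      omega
    · rw [sum_range_succ', Nat.choose_zero_succ, zero_mul, add_zero]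
      simp only [Nat.choose_succ_succ' _ j, add_mul, sum_add_distrib, Nat.add_sub_add_right]
      rw [ih, ih, show m + 1 + r + 1 = m + r + 1 + 1 by omega,
        show j + 1 + r + 1 = j + r + 1 + 1 by omega, Nat.choose_succ_succ' (m + r + 1)]

theorem coeff_pow_eq_sum_piAntidiag {R : Type*} [CommSemiring R] (p : R⟦X⟧) (l n : ℕ) :
    coeff n (p ^ l) = ∑ f ∈ piAntidiag (univ : Finset (Fin l)) n, ∏ i, coeff (f i) p := by
  rw [← Fin.prod_const, coeff_prod]
  simp only [finsuppAntidiag, sum_map]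
  exact sum_attach _ fun f : Fin l → ℕ => ∏ i, coeff (f i) p

theorem coeff_exp_sub_one (j : ℕ) :
    coeff j (exp ℝ - 1) = if j ≠ 0 then ((j ! : ℝ))⁻¹ else 0 := by
  rcases eq_or_ne j 0 with rfl | hj <;> simp [coeff_exp, coeff_one, *]

theorem factorial_mul_coeff_exp_sub_one_pow (l n : ℕ) :
    (n ! : ℝ) * coeff n ((exp ℝ - 1) ^ l)
      = ∑ j ∈ range (l + 1), (-1) ^ (l - j) * (l.choose j : ℝ) * (j : ℝ) ^ n := by
  rw [show exp ℝ - 1 = exp ℝ + C (-1) by simp [sub_eq_add_neg], add_pow, map_sum, mul_sum]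
  refine sum_congr rfl fun j _ => ?_
  rw [← map_pow, ← map_natCast C, mul_assoc, ← map_mul, coeff_mul_C, exp_pow_eq_rescale_exp,
    coeff_rescale, coeff_exp, map_div₀, map_one, map_natCast]
  field_simp

theorem sum_compositions_length_eq_sum_piAntidiag {M : Type*} [AddCommMonoid M] (n l : ℕ)
    (g : List ℕ → M) :
    ∑ c ∈ univ.filter (fun c : Composition n => c.length = l), g c.blocks
      = ∑ f ∈ (piAntidiag (univ : Finset (Fin l)) n).filter (fun f => ∀ i, f i ≠ 0),
          g (List.ofFn f) := by
  symm
  refine sum_bij (fun f hf => ⟨List.ofFn f, ?pos, ?sum⟩) ?mem ?inj ?surj ?val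
  case pos =>
    simp only [mem_filter, mem_piAntidiag] at hf
    simpa [List.mem_ofFn, Nat.pos_iff_ne_zero] using hf.2
  case sum =>
    simp only [mem_filter, mem_piAntidiag] at hf
    simpa [List.sum_ofFn] using hf.1.1
  case mem => intro f _; simp [Composition.length]
  case inj =>
    intro f _ f' _ h
    exact List.ofFn_injective (congrArg Composition.blocks h)
  case surj =>
    intro c hc
    obtain rfl : c.length = l := (mem_filter.1 hc).2
    refine ⟨c.blocksFun, ?_, Composition.ext c.ofFn_blocksFun⟩
    simp [c.sum_blocksFun, fun i => Nat.one_le_iff_ne_zero.1 (c.one_le_blocksFun i)]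
  case val => intro f _; rfl

theorem sum_multinomial_compositions_length (n l : ℕ) :
    ∑ c ∈ univ.filter (fun c : Composition n => c.length = l),
        (n ! : ℝ) / ((c.blocks.map Nat.factorial).prod : ℝ)
      = ∑ j ∈ range (l + 1), (-1) ^ (l - j) * (l.choose j : ℝ) * (j : ℝ) ^ n := by
  rw [sum_compositions_length_eq_sum_piAntidiag n l
      (fun L => (n ! : ℝ) / ((L.map Nat.factorial).prod : ℝ)),
    ← factorial_mul_coeff_exp_sub_one_pow, coeff_pow_eq_sum_piAntidiag, mul_sum, sum_filter]
  refine sum_congr rfl fun f _ => ?_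
  simp only [coeff_exp_sub_one, Fintype.prod_ite_zero, List.map_ofFn, List.prod_ofFn]
  split_ifs <;> simp [div_eq_mul_inv]

def eulerian (n k : ℕ) : ℤ :=
  ∑ i ∈ range (k + 2), (-1) ^ i * ((n + 1).choose i : ℤ) * ((k : ℤ) + 1 - i) ^ n

theorem eulerian_symm (k r : ℕ) : eulerian (k + r + 1) r = eulerian (k + r + 1) k := by
  -- The terms `i ≥ k + 2` of this vanishing finite difference are, reflected, minus the terms
  -- of `eulerian (k + r + 1) r`.
  have hΔ := alternating_sum_range_choose_mul_sub_pow (Nat.lt_add_one (k + r + 1)) ((k : ℤ) + 1)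
  rw [show k + r + 1 + 1 + 1 = k + 2 + (r + 1) by omega, sum_range_add, ← eulerian] at hΔ
  have htail : ∑ x ∈ range (r + 1), (-1) ^ (k + 2 + x) *
      ((k + r + 1 + 1).choose (k + 2 + x) : ℤ) * ((k : ℤ) + 1 - (k + 2 + x : ℕ)) ^ (k + r + 1)
      = -eulerian (k + r + 1) r := by
    rw [eulerian, sum_range_succ _ (r + 1), Nat.cast_add_one, sub_self,
      zero_pow (Nat.succ_ne_zero _), mul_zero, add_zero, ← sum_range_reflect, ← sum_neg_distrib]
    refine sum_congr rfl fun x hx => ?_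
    obtain ⟨y, rfl⟩ := Nat.exists_eq_add_of_le (Nat.lt_succ_iff.1 (mem_range.1 hx))
    rw [show x + y + 1 - 1 - x = y by omega,
      Nat.choose_symm_of_eq_add (show k + (x + y) + 1 + 1 = k + 2 + y + x by omega)]
    have hsign : (-1 : ℤ) ^ (k + 2 + y) * (-1) ^ (k + (x + y) + 1) = -(-1) ^ x := by
      rw [← pow_add, neg_one_pow_congr (n := x + 1) (by simp only [Nat.even_iff]; omega),
        pow_succ, mul_neg_one]
    push_cast
    rw [show (k : ℤ) + 1 - (k + 2 + y) = -1 * ((x + y : ℤ) + 1 - x) by ring, mul_pow]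
    linear_combination
      ((k + (x + y) + 1 + 1).choose x : ℤ) * ((x + y : ℤ) + 1 - x) ^ (k + (x + y) + 1) * hsign
  linarith

theorem bcoef_eq_neg_sum_sum {n : ℕ} (hn : n ≠ 0) (k : ℕ) :
    bcoef n k = -∑ l ∈ range (k + 2), ∑ j ∈ range (k + 2),
      (-1) ^ j * (j : ℝ) ^ n * (l.choose j * (n - l).choose (k + 1 - l) : ℕ) := by
  rw [bcoef, ← sum_neg_distrib]
  refine sum_subset_zero_on_sdiff (fun l hl => mem_range.2 (by have := (mem_Icc.1 hl).2; omega))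
    (fun l hl => ?_) (fun l hl => ?_)
  · obtain rfl : l = 0 := by
      simp only [Finset.mem_sdiff, Finset.mem_range, Finset.mem_Icc] at hl; omega
    simp only [neg_eq_zero]
    refine sum_eq_zero fun j _ => ?_
    rcases j with _ | j <;> simp [hn]
  · have hlk := (mem_Icc.1 hl).2
    rw [sum_multinomial_compositions_length, mul_sum, ← sum_neg_distrib,
      ← sum_subset (range_subset_range.2 (by omega : l + 1 ≤ k + 2))]
    · refine sum_congr rfl fun j hj => ?_
      have hsign : (-1 : ℝ) ^ (l + 1) * (-1) ^ (l - j) = -(-1) ^ j := by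
        have := mem_range.1 hj
        rw [← pow_add, neg_one_pow_congr (n := j + 1) (by simp only [Nat.even_iff]; omega),
          pow_succ, mul_neg_one]
      push_cast
      linear_combination ((n - l).choose (k + 1 - l) * l.choose j * (j : ℝ) ^ n : ℝ) * hsign
    · intro j _ hj
      rw [Nat.choose_eq_zero_of_lt (by simpa using hj)]
      simp

theorem bcoef_eq_neg_sum_pow_mul_choose (k r : ℕ) :
    bcoef (k + r + 1) k
      = -∑ j ∈ range (k + 2),
          (-1) ^ j * (j : ℝ) ^ (k + r + 1) * ((k + r + 2).choose (j + r + 1) : ℕ) := by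
  rw [bcoef_eq_neg_sum_sum (Nat.succ_ne_zero _), sum_comm]
  congr 1
  refine sum_congr rfl fun j _ => ?_
  have hV : ∑ l ∈ range (k + 2), l.choose j * (k + r + 1 - l).choose (k + 1 - l)
      = (k + r + 2).choose (j + r + 1) := by
    rw [show k + r + 2 = k + 1 + r + 1 by omega, ← sum_range_choose_mul_choose_add]
    refine sum_congr rfl fun l hl => ?_
    have := mem_range.1 hl
    rw [show k + r + 1 - l = k + 1 - l + r by omega, Nat.choose_symm_add]
  rw [← mul_sum, ← Nat.cast_sum, hV]

theorem bcoef_eq_neg_one_pow_mul_eulerian (k r : ℕ) :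
    bcoef (k + r + 1) k = (-1) ^ k * eulerian (k + r + 1) k := by
  rw [bcoef_eq_neg_sum_pow_mul_choose, eulerian, Int.cast_sum, mul_sum, ← sum_range_reflect,
    ← sum_neg_distrib]
  refine sum_congr rfl fun i hi => ?_
  obtain ⟨j, hj⟩ := Nat.exists_eq_add_of_le (Nat.lt_succ_iff.1 (mem_range.1 hi))
  rw [show k + 2 - 1 - i = j by omega,
    Nat.choose_symm_of_eq_add (show k + r + 2 = j + r + 1 + i by omega)]
  have hsign : (-1 : ℝ) ^ k * (-1) ^ i = -(-1) ^ j := by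
    rw [← pow_add, neg_one_pow_congr (n := j + 1) (by simp only [Nat.even_iff]; omega),
      pow_succ, mul_neg_one]
  have hbase : (k : ℝ) + 1 - i = j := by
    rw [sub_eq_iff_eq_add']
    exact_mod_cast hj
  push_cast
  rw [hbase]
  linear_combination -((k + r + 1 + 1).choose i * (j : ℝ) ^ (k + r + 1) : ℝ) * hsign

theorem bcoef_symm (k r : ℕ) : bcoef (k + r + 1) r = (-1) ^ (k + r) * bcoef (k + r + 1) k := by
  have h := bcoef_eq_neg_one_pow_mul_eulerian r k
  rw [add_comm r k] at h
  rw [h, eulerian_symm, bcoef_eq_neg_one_pow_mul_eulerian, ← mul_assoc, ← pow_add]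
  congr 1
  exact neg_one_pow_congr (by simp only [Nat.even_iff]; omega)

theorem deriv_neg_eq_of_const_sub_comp_neg {𝕜 F : Type*} [NontriviallyNormedField 𝕜]
    [NormedAddCommGroup F] [NormedSpace 𝕜 F] {f : 𝕜 → F} {a : F}
    (h : ∀ x, a - f (-x) = f x) (x : 𝕜) : deriv f (-x) = deriv f x :=
  calc deriv f (-x) = deriv (fun y => a - f (-y)) x := by
        rw [deriv_const_sub, deriv_comp_neg, neg_neg]
    _ = deriv f x := by simp only [h]

noncomputable def shapeMoment (Ψ : ℝ → ℝ) (i j : ℕ) : ℝ :=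
  ∫ x, x * (-(deriv Ψ x)) * Ψ x ^ i * (1 - Ψ x) ^ j

theorem shapeMoment_swap {Ψ : ℝ → ℝ} (hsym : ∀ x, 1 - Ψ (-x) = Ψ x) (i j : ℕ) :
    shapeMoment Ψ j i = -shapeMoment Ψ i j := by
  rw [shapeMoment, shapeMoment, ← integral_neg_eq_self, ← integral_neg]
  congr 1 with x
  have hΨ : Ψ (-x) = 1 - Ψ x := by rw [← hsym x, sub_sub_cancel]
  rw [hΨ, sub_sub_cancel, deriv_neg_eq_of_const_sub_comp_neg hsym]
  ring

theorem B_odd_vanishes_general (m : ℕ) (Ψ : ℝ → ℝ)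
    (hsym : ∀ x, 1 - Ψ (-x) = Ψ x) :
    ∑ k ∈ Finset.range (2 * m + 1),
        bcoef (2 * m + 1) k *
          ∫ x : ℝ, x * (-(deriv Ψ x)) * Ψ x ^ k * (1 - Ψ x) ^ (2 * m - k) = 0 := by
  change ∑ k ∈ range (2 * m + 1), bcoef (2 * m + 1) k * shapeMoment Ψ k (2 * m - k) = 0
  set f : ℕ → ℝ := fun k => bcoef (2 * m + 1) k * shapeMoment Ψ k (2 * m - k)
  have hpair : ∀ k ∈ range (2 * m + 1), f (2 * m + 1 - 1 - k) = -f k := by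
    intro k hk
    obtain ⟨r, hr⟩ := Nat.exists_eq_add_of_le (Nat.lt_succ_iff.1 (mem_range.1 hk))
    simp only [f]
    rw [show 2 * m + 1 - 1 - k = r by omega, show 2 * m - r = k by omega,
      show 2 * m - k = r by omega, hr, bcoef_symm, shapeMoment_swap hsym, ← hr,
      (even_two_mul m).neg_one_pow]
    ring
  have hreflect := sum_range_reflect f (2 * m + 1)
  rw [sum_congr rfl hpair, sum_neg_distrib] at hreflect
  linarith

theorem B_odd_vanishes (m : ℕ) (hm : 1 ≤ m) (Ψ : ℝ → ℝ)
    (hdiff : Differentiable ℝ Ψ) (hmono : Antitone Ψ)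
    (hrange : ∀ x, Ψ x ∈ Set.Icc (0 : ℝ) 1)
    (hsym : ∀ x, 1 - Ψ (-x) = Ψ x)
    (hL1 : IntegrableOn Ψ (Set.Ioi 0))
    (hint : ∀ k ≤ 2 * m, Integrable (fun x : ℝ =>
      x * (-(deriv Ψ x)) * Ψ x ^ k * (1 - Ψ x) ^ (2 * m - k))) :
    ∑ k ∈ Finset.range (2 * m + 1),
        bcoef (2 * m + 1) k *
          ∫ x : ℝ, x * (-(deriv Ψ x)) * Ψ x ^ k * (1 - Ψ x) ^ (2 * m - k) = 0 :=
  B_odd_vanishes_general m Ψ hsym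
end
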